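/- On the open set D = {(x, φ, θ) ∈ ℝ³ : x > 0, 0 < φ < π/2}, define the smooth complex-valued functions A = sin θ coth x + i cot φ, B = sin θ cot φ − i coth x, C = cos θ. Then the complex-valued 1-form α = A dx + B dφ + C dθ satisfies the Frobenius integrability condition α ∧ dα = 0 on D; explicitly, A(∂_φ C − ∂_θ B) + B(∂_θ A − ∂_x C) + C(∂_x B − ∂_φ A) = 0 identically on D. (This 1-form spans the terminal derived system of the complex characteristic system V₊ of the Monge–Ampère system encoding the Darboux equation for the metric g₁ = (cosh⁴x)dx² + (sinh²x)dy².) -/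

import Mathlib

noncomputable section
open Real

/-- Partial derivative `∂ᵢ` of a complex-valued function on `ℝ³` (coordinates `x = p 0`,
`φ = p 1`, `θ = p 2`). -/
def pd3C (i : Fin 3) (f : (Fin 3 → ℝ) → ℂ) : (Fin 3 → ℝ) → ℂ :=
  fun p => fderiv ℝ f p (Pi.single i 1)

/-- `A = sin θ coth x + i cot φ`. -/
def AfunC : (Fin 3 → ℝ) → ℂ :=
  fun p => (Real.sin (p 2) * (Real.cosh (p 0) / Real.sinh (p 0)) : ℝ)
    + Complex.I * (Real.cos (p 1) / Real.sin (p 1) : ℝ)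

/-- `B = sin θ cot φ − i coth x`. -/
def BfunC : (Fin 3 → ℝ) → ℂ :=
  fun p => (Real.sin (p 2) * (Real.cos (p 1) / Real.sin (p 1)) : ℝ)
    - Complex.I * (Real.cosh (p 0) / Real.sinh (p 0) : ℝ)

/-- `C = cos θ`. -/
def CfunC : (Fin 3 → ℝ) → ℂ :=
  fun p => (Real.cos (p 2) : ℝ)

/-!
Each partial derivative is a one-variable derivative along a coordinate line, and the
Riccati-type rules `coth' = 1 - coth²`, `cot' = -(1 + cot²)` express all of them as
polynomials in `sin θ`, `cos θ`, `coth x`, `cot φ`. The Frobenius expression then becomes a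
polynomial identity in these four quantities: the `sin θ` cross terms of `A ∂_θ B` and
`B ∂_θ A` cancel, and `-i cos θ (coth² x + cot² φ)` cancels against `C (∂_x B - ∂_φ A)`.
-/

theorem fderiv_apply_single_eq_of_hasDerivAt_update {𝕜 ι F : Type*} [NontriviallyNormedField 𝕜]
    [Fintype ι] [DecidableEq ι] [NormedAddCommGroup F] [NormedSpace 𝕜 F]
    {f : (ι → 𝕜) → F} {p : ι → 𝕜} {i : ι} {c : F} (hf : DifferentiableAt 𝕜 f p)
    (hc : HasDerivAt (fun t => f (Function.update p i t)) c (p i)) :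
    fderiv 𝕜 f p (Pi.single i 1) = c := by
  have hline := hf.hasFDerivAt.comp_hasDerivAt_of_eq (p i) (hasDerivAt_update p i (p i))
    (Function.update_eq_self i p).symm
  exact hline.unique hc

theorem Real.hasDerivAt_cosh_div_sinh {x : ℝ} (hx : sinh x ≠ 0) :
    HasDerivAt (fun t => cosh t / sinh t) (1 - (cosh x / sinh x) ^ 2) x := by
  refine ((hasDerivAt_cosh x).div (hasDerivAt_sinh x) hx).congr_deriv ?_
  field_simp

theorem Real.hasDerivAt_cos_div_sin {x : ℝ} (hx : sin x ≠ 0) :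
    HasDerivAt (fun t => cos t / sin t) (-(1 + (cos x / sin x) ^ 2)) x := by
  refine ((hasDerivAt_cos x).div (hasDerivAt_sin x) hx).congr_deriv ?_
  field_simp
  ring

section
variable {p : Fin 3 → ℝ}

theorem differentiableAt_AfunC (hx : sinh (p 0) ≠ 0) (hφ : sin (p 1) ≠ 0) :
    DifferentiableAt ℝ AfunC p := by
  unfold AfunC
  fun_prop (disch := assumption)

theorem differentiableAt_BfunC (hx : sinh (p 0) ≠ 0) (hφ : sin (p 1) ≠ 0) :
    DifferentiableAt ℝ BfunC p := by
  unfold BfunC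
  fun_prop (disch := assumption)

theorem differentiableAt_CfunC : DifferentiableAt ℝ CfunC p := by
  unfold CfunC
  fun_prop

theorem pd3C_eq_of_hasDerivAt_update {f : (Fin 3 → ℝ) → ℂ} {i : Fin 3} {c : ℂ}
    (hf : DifferentiableAt ℝ f p) (hc : HasDerivAt (fun t => f (Function.update p i t)) c (p i)) :
    pd3C i f p = c :=
  fderiv_apply_single_eq_of_hasDerivAt_update hf hc

theorem pd3C_two_AfunC (hx : sinh (p 0) ≠ 0) (hφ : sin (p 1) ≠ 0) :
    pd3C 2 AfunC p = (cos (p 2) * (cosh (p 0) / sinh (p 0)) : ℝ) := by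
  refine pd3C_eq_of_hasDerivAt_update (differentiableAt_AfunC hx hφ) ?_
  simp only [AfunC, Function.update_self, Function.update_of_ne (by decide : (0 : Fin 3) ≠ 2),
    Function.update_of_ne (by decide : (1 : Fin 3) ≠ 2)]
  exact (((hasDerivAt_sin (p 2)).mul_const _).ofReal_comp).add_const _

theorem pd3C_one_AfunC (hx : sinh (p 0) ≠ 0) (hφ : sin (p 1) ≠ 0) :
    pd3C 1 AfunC p = Complex.I * (-(1 + (cos (p 1) / sin (p 1)) ^ 2) : ℝ) := by
  refine pd3C_eq_of_hasDerivAt_update (differentiableAt_AfunC hx hφ) ?_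
  simp only [AfunC, Function.update_self, Function.update_of_ne (by decide : (0 : Fin 3) ≠ 1),
    Function.update_of_ne (by decide : (2 : Fin 3) ≠ 1)]
  exact ((Real.hasDerivAt_cos_div_sin hφ).ofReal_comp.const_mul _).const_add _

theorem pd3C_two_BfunC (hx : sinh (p 0) ≠ 0) (hφ : sin (p 1) ≠ 0) :
    pd3C 2 BfunC p = (cos (p 2) * (cos (p 1) / sin (p 1)) : ℝ) := by
  refine pd3C_eq_of_hasDerivAt_update (differentiableAt_BfunC hx hφ) ?_
  simp only [BfunC, Function.update_self, Function.update_of_ne (by decide : (0 : Fin 3) ≠ 2),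
    Function.update_of_ne (by decide : (1 : Fin 3) ≠ 2)]
  exact (((hasDerivAt_sin (p 2)).mul_const _).ofReal_comp).sub_const _

theorem pd3C_zero_BfunC (hx : sinh (p 0) ≠ 0) (hφ : sin (p 1) ≠ 0) :
    pd3C 0 BfunC p = -(Complex.I * (1 - (cosh (p 0) / sinh (p 0)) ^ 2 : ℝ)) := by
  refine pd3C_eq_of_hasDerivAt_update (differentiableAt_BfunC hx hφ) ?_
  simp only [BfunC, Function.update_self, Function.update_of_ne (by decide : (1 : Fin 3) ≠ 0),
    Function.update_of_ne (by decide : (2 : Fin 3) ≠ 0)]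
  exact ((Real.hasDerivAt_cosh_div_sinh hx).ofReal_comp.const_mul _).const_sub _

theorem pd3C_CfunC_of_ne_two {i : Fin 3} (hi : i ≠ 2) : pd3C i CfunC p = 0 := by
  refine pd3C_eq_of_hasDerivAt_update differentiableAt_CfunC ?_
  simp only [CfunC, Function.update_of_ne hi.symm]
  exact hasDerivAt_const _ _

end

/-- On `D = {x > 0, 0 < φ < π/2}`, the complex-valued 1-form `α = A dx + B dφ + C dθ`
with `A = sin θ coth x + i cot φ`, `B = sin θ cot φ − i coth x`, `C = cos θ` satisfies
the Frobenius condition `α ∧ dα = 0`, expressed by the scalar identity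
`A(∂_φ C − ∂_θ B) + B(∂_θ A − ∂_x C) + C(∂_x B − ∂_φ A) = 0`.
(This 1-form spans the terminal derived system of the complex characteristic system `V₊`
for the Darboux equation of the metric `g₁ = cosh⁴x dx² + sinh²x dy²`.) -/
theorem frobenius_terminal_derived_system_g1 :
    ∀ p : Fin 3 → ℝ, 0 < p 0 → 0 < p 1 → p 1 < Real.pi / 2 →
      AfunC p * (pd3C 1 CfunC p - pd3C 2 BfunC p)
        + BfunC p * (pd3C 2 AfunC p - pd3C 0 CfunC p)
        + CfunC p * (pd3C 0 BfunC p - pd3C 1 AfunC p) = 0 := by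
  intro p hx hφ₀ hφ₁
  have hsinh : sinh (p 0) ≠ 0 := (sinh_pos_iff.2 hx).ne'
  have hsin : sin (p 1) ≠ 0 := (sin_pos_of_pos_of_lt_pi hφ₀ (by linarith [pi_pos])).ne'
  rw [pd3C_CfunC_of_ne_two (by decide), pd3C_CfunC_of_ne_two (by decide),
    pd3C_two_AfunC hsinh hsin, pd3C_one_AfunC hsinh hsin, pd3C_two_BfunC hsinh hsin,
    pd3C_zero_BfunC hsinh hsin]
  simp only [AfunC, BfunC, CfunC]
  push_cast
  ring
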